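/- Let κ : D × Γ → ℝ satisfy 0 < κ_min ≤ κ(x,y) ≤ κ_max, and suppose y ↦ κ(·,y) is Lipschitz from Γ ⊆ ℝ^m (with Euclidean metric) into L^∞(D) with constant L. Then the parameter-to-solution map y ↦ u(·,y) ∈ H^1_0(D) of the Darcy problem −∇·(κ(·,y)∇u(·,y)) = f is Lipschitz continuous, with Lipschitz constant at most L·C_P²‖f‖_{H^{-1}} / κ_min². -/
import Mathlib


/-- Lipschitz continuity of the parameter-to-solution map for the Darcy problem.
Abstractly, `V = H¹₀(D)` with the `H¹₀` norm, `Γ ⊆ ℝ^m` with the Euclidean metric,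
and `a y` is the bilinear form `a_y(u,w) = ∫_D κ(·,y)⟨∇u,∇w⟩`.  Uniform ellipticity
`0 < κ_min ≤ κ(x,y) ≤ κ_max` gives the coercivity hypothesis (with Poincaré
constant `C_P` entering through the equivalence of the dual pairing), and the
Lipschitz dependence `‖κ(·,y) − κ(·,y')‖_{L^∞} ≤ L·|y − y'|` gives
`|a_y(v,w) − a_{y'}(v,w)| ≤ L·|y − y'|·‖v‖‖w‖`; the `C_P` factors record
the passage between the energy pairing and the `H¹₀`/`H⁻¹` norms.  Then
`‖u(·,y) − u(·,y')‖ ≤ L·C_P²·‖f‖_{H⁻¹}·|y − y'| / κ_min²`. -/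
theorem darcy_parameter_to_solution_lipschitz
    {V : Type*} [NormedAddCommGroup V] [InnerProductSpace ℝ V] [CompleteSpace V]
    {m : ℕ} (Γ : Set (EuclideanSpace ℝ (Fin m)))
    (a : EuclideanSpace ℝ (Fin m) → V →ₗ[ℝ] V →ₗ[ℝ] ℝ)
    (κmin κmax L : ℝ) (hκmin : 0 < κmin) (hL : 0 ≤ L)
    (hcoer : ∀ y ∈ Γ, ∀ v : V, κmin * ‖v‖ ^ 2 ≤ a y v v)
    (hcont : ∀ y ∈ Γ, ∀ v w : V, |a y v w| ≤ κmax * ‖v‖ * ‖w‖)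
    (CP : ℝ) (hCP : 1 ≤ CP)
    (hlip : ∀ y ∈ Γ, ∀ y' ∈ Γ, ∀ v w : V,
      |a y v w - a y' v w| ≤ L * dist y y' * ‖v‖ * ‖w‖)
    (f : V →L[ℝ] ℝ) (fdual : ℝ) (hfdual : 0 ≤ fdual)
    (hf : ∀ v : V, |f v| ≤ CP * fdual * ‖v‖)
    (u : EuclideanSpace ℝ (Fin m) → V)
    (hu : ∀ y ∈ Γ, ∀ w : V, a y (u y) w = f w) :
    ∀ y ∈ Γ, ∀ y' ∈ Γ,
      ‖u y - u y'‖ ≤ (L * CP ^ 2 * fdual / κmin ^ 2) * dist y y' := by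
  intro y hy y' hy'
  set e := u y - u y' with he
  -- bound on ‖u y'‖
  have hub : ‖u y'‖ ≤ CP * fdual / κmin := by
    have h1 : κmin * ‖u y'‖ ^ 2 ≤ a y' (u y') (u y') := hcoer y' hy' (u y')
    have h2 : a y' (u y') (u y') = f (u y') := hu y' hy' (u y')
    have h3 : (f (u y') : ℝ) ≤ CP * fdual * ‖u y'‖ :=
      le_trans (le_abs_self _) (hf (u y'))
    have h4 : κmin * ‖u y'‖ ^ 2 ≤ CP * fdual * ‖u y'‖ := by rw [h2] at h1; linarith
    rcases eq_or_lt_of_le (norm_nonneg (u y')) with h0 | h0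
    · rw [← h0]; positivity
    · rw [le_div_iff₀ hκmin]; nlinarith
  have key : κmin * ‖e‖ ^ 2 ≤ L * dist y y' * ‖u y'‖ * ‖e‖ := by
    have h1 : κmin * ‖e‖ ^ 2 ≤ a y e e := hcoer y hy e
    have h2 : a y e e = a y' (u y') e - a y (u y') e := by
      have hy1 : a y (u y) e = f e := hu y hy e
      have hy2 : a y' (u y') e = f e := hu y' hy' e
      show a y (u y - u y') e = _
      rw [show a y (u y - u y') = a y (u y) - a y (u y') from map_sub _ _ _,
        LinearMap.sub_apply, hy1, ← hy2]
    have h3 : a y' (u y') e - a y (u y') e ≤ L * dist y y' * ‖u y'‖ * ‖e‖ := by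
      have := hlip y' hy' y hy (u y') e
      exact le_trans (le_abs_self _) (by rwa [dist_comm y' y] at this)
    linarith
  rcases eq_or_lt_of_le (norm_nonneg e) with h0 | h0
  · rw [← h0]
    have : 0 ≤ dist y y' := dist_nonneg
    positivity
  · have hd : 0 ≤ dist y y' := dist_nonneg
    have step1 : κmin * ‖e‖ ≤ L * dist y y' * ‖u y'‖ := by
      have := key
      rw [sq] at this
      nlinarith
    have step2 : L * dist y y' * ‖u y'‖ ≤ L * dist y y' * (CP * fdual / κmin) := by
      apply mul_le_mul_of_nonneg_left hub (by positivity)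
    have : ‖e‖ ≤ L * dist y y' * (CP * fdual / κmin) / κmin := by
      rw [le_div_iff₀ hκmin]
      linarith
    calc ‖e‖ ≤ L * dist y y' * (CP * fdual / κmin) / κmin := this
      _ = (L * CP * fdual / κmin ^ 2) * dist y y' := by ring
      _ ≤ (L * CP ^ 2 * fdual / κmin ^ 2) * dist y y' := by
        have hCP2 : CP ≤ CP ^ 2 := by nlinarith
        gcongr
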